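/- arXiv:0711.0158 — 3 statements merged into one kernel-verified Lean document; each statement's English description precedes it below -/
import Mathlib

section
/- Let X be a Polish space and let P_c(X) denote the Polish space of continuous (nonatomic) Borel probability measures on X, a Borel subset of the space P(X) of Borel probability measures with the weak topology. Then there is a Borel map f : P_c(X) × X → [0,1] such that for every μ ∈ P_c(X), the map f_μ = f(μ,·) restricts to a measure-preserving bijection from a μ-conull Borel subset of X onto a Borel subset of full Lebesgue measure in [0,1]; in particular the pushforward of μ under f_μ is Lebesgue measure. -/
open MeasureTheory Set Filter Topology ProbabilityTheory
open scoped ENNReal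

noncomputable section

/-- Lebesgue measure on the unit interval `[0,1]`. -/
def lebI : Measure unitInterval := Measure.comap Subtype.val volume

namespace Stmt15

def toI (x : ℝ) : unitInterval := Set.projIcc 0 1 zero_le_one x

lemma measurable_toI : Measurable toI := by
  unfold toI
  exact continuous_projIcc.measurable

lemma toI_le_iff {x : ℝ} (hx : x ∈ Icc (0:ℝ) 1) {a : unitInterval} :
    toI x ≤ a ↔ x ≤ (a : ℝ) := by
  rw [toI, projIcc_of_mem _ hx]
  exact Iff.rfl

lemma toI_inj {x y : ℝ} (hx : x ∈ Icc (0:ℝ) 1) (hy : y ∈ Icc (0:ℝ) 1)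
    (h : toI x = toI y) : x = y := by
  have := congrArg Subtype.val h
  rwa [toI, toI, projIcc_of_mem _ hx, projIcc_of_mem _ hy] at this

lemma lebI_apply (s : Set unitInterval) : lebI s = volume (Subtype.val '' s) :=
  (MeasurableEmbedding.subtype_coe measurableSet_Icc).comap_apply _ _

lemma lebI_singleton (a : unitInterval) : lebI {a} = 0 := by
  rw [lebI_apply, image_singleton, Real.volume_singleton]

instance : IsProbabilityMeasure lebI := by
  constructor
  rw [lebI_apply, image_univ, Subtype.range_coe, Real.volume_Icc]
  simp

variable (ν : Measure ℝ) [IsProbabilityMeasure ν] [NullSingletonClass ν]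

lemma leftLim_cdf (x : ℝ) : Function.leftLim (cdf ν) x = cdf ν x := by
  have h := StieltjesFunction.measure_singleton (cdf ν) x
  rw [measure_cdf, measure_singleton, eq_comm, ENNReal.ofReal_eq_zero, sub_nonpos] at h
  exact le_antisymm ((cdf ν).mono.leftLim_le le_rfl) h

lemma continuous_cdf : Continuous (cdf ν) := by
  rw [continuous_iff_continuousAt]
  intro x
  rw [(cdf ν).mono.continuousAt_iff_leftLim_eq_rightLim, leftLim_cdf]
  have h := ((cdf ν).right_continuous x).mono (Ioi_subset_Ici le_rfl)
  exact ((cdf ν).mono.continuousWithinAt_Ioi_iff_rightLim_eq.1 h).symm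

lemma measure_cdf_le {c : ℝ} (hc0 : 0 ≤ c) (hc1 : c ≤ 1) :
    ν {t | cdf ν t ≤ c} = ENNReal.ofReal c := by
  set A := {t | cdf ν t ≤ c} with hA
  have hAclosed : IsClosed A := isClosed_Iic.preimage (continuous_cdf ν)
  rcases A.eq_empty_or_nonempty with hE | hNE
  · have hc : c = 0 := by
      by_contra hc
      have hcpos : 0 < c := lt_of_le_of_ne hc0 (Ne.symm hc)
      have := (tendsto_cdf_atBot ν).eventually_lt_const hcpos
      rcases this.exists with ⟨t, ht⟩
      have htA : t ∈ A := le_of_lt ht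
      rw [hE] at htA
      exact Set.notMem_empty t htA
    rw [hE, hc]; simp
  · by_cases hb : BddAbove A
    · set b := sSup A with hbdef
      have hbA : b ∈ A := hAclosed.csSup_mem hNE hb
      have hAeq : A = Iic b := by
        ext t
        constructor
        · exact fun ht => le_csSup hb ht
        · intro ht
          exact le_trans ((cdf ν).mono ht) hbA
      have hFb : cdf ν b = c := by
        refine le_antisymm hbA ?_
        by_contra hlt
        push_neg at hlt
        have hnb : {y | cdf ν y < c} ∈ 𝓝 b :=
          (isOpen_lt (continuous_cdf ν) continuous_const).mem_nhds hlt
        rcases Metric.mem_nhds_iff.1 hnb with ⟨ε, hε, hball⟩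
        have hmem : b + ε/2 ∈ A := by
          have hball' : b + ε/2 ∈ Metric.ball b ε := by
            rw [Metric.mem_ball, Real.dist_eq]
            rw [abs_of_nonneg (by linarith : (0:ℝ) ≤ b + ε/2 - b)]
            linarith
          have h2 : cdf ν (b + ε/2) < c := hball hball'
          exact h2.le
        have : b + ε/2 ≤ b := le_csSup hb hmem
        linarith
      rw [hAeq, ← ofReal_cdf, hFb]
    · have hAuniv : A = univ := by
        rcases not_bddAbove_iff.1 hb with h
        ext t
        simp only [mem_univ, iff_true]
        rcases h t with ⟨y, hyA, hty⟩
        exact le_trans ((cdf ν).mono hty.le) hyA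
      have hc : c = 1 := by
        refine le_antisymm hc1 ?_
        by_contra hlt
        push_neg at hlt
        have := (tendsto_cdf_atTop ν).eventually_const_lt hlt
        rcases (this.and (eventually_ge_atTop (0:ℝ))).exists with ⟨t, ht, -⟩
        have htA : t ∈ A := hAuniv ▸ mem_univ t
        exact absurd (htA : cdf ν t ≤ c) ht.not_ge
      rw [hAuniv, hc]
      simp [measure_univ]

lemma map_cdf : Measure.map (fun t => toI (cdf ν t)) ν = lebI := by
  have hm : Measurable fun t => toI (cdf ν t) :=
    measurable_toI.comp (cdf ν).mono.measurable
  haveI : IsProbabilityMeasure (Measure.map (fun t => toI (cdf ν t)) ν) :=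
    Measure.isProbabilityMeasure_map hm.aemeasurable
  refine Measure.ext_of_Iic _ _ (fun a => ?_)
  rw [Measure.map_apply hm measurableSet_Iic]
  have hpre : (fun t => toI (cdf ν t)) ⁻¹' (Iic a) = {t | cdf ν t ≤ (a : ℝ)} := by
    ext t
    simp only [mem_preimage, mem_Iic, mem_setOf_eq]
    exact toI_le_iff ⟨cdf_nonneg ν t, cdf_le_one ν t⟩
  rw [hpre, measure_cdf_le ν a.2.1 a.2.2, lebI_apply]
  have himg : (Subtype.val '' Iic a : Set ℝ) = Icc 0 (a : ℝ) := by
    ext x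
    constructor
    · rintro ⟨y, hy, rfl⟩
      exact ⟨y.2.1, hy⟩
    · intro hx
      exact ⟨⟨x, hx.1, le_trans hx.2 a.2.2⟩, hx.2, rfl⟩
  rw [himg, Real.volume_Icc, sub_zero]
lemma measurable_eval {X : Type} [TopologicalSpace X] [PolishSpace X] [MeasurableSpace X]
    [BorelSpace X] {s : Set X} (hs : MeasurableSet s) :
    @Measurable (ProbabilityMeasure X) ℝ≥0∞ (borel _) _ (fun μ => (μ : Measure X) s) := by
  letI := TopologicalSpace.upgradeIsCompletelyMetrizable X
  letI : MeasurableSpace (ProbabilityMeasure X) := borel _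
  haveI : BorelSpace (ProbabilityMeasure X) := ⟨rfl⟩
  have hgen : (inferInstance : MeasurableSpace X) = MeasurableSpace.generateFrom {s | IsOpen s} :=
    BorelSpace.measurable_eq
  refine MeasurableSpace.induction_on_inter
    (C := fun t _ => Measurable fun μ : ProbabilityMeasure X => (μ : Measure X) t)
    hgen isPiSystem_isOpen ?_ ?_ ?_ ?_ _ hs
  · simp only [measure_empty]
    exact measurable_const
  · intro G hG
    have hls : LowerSemicontinuous (fun μ : ProbabilityMeasure X => (μ : Measure X) G) := by
      rw [lowerSemicontinuous_iff_le_liminf]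
      intro μ
      exact ProbabilityMeasure.le_liminf_measure_open_of_tendsto tendsto_id hG
    exact hls.measurable
  · intro t ht iht
    have heq : (fun μ : ProbabilityMeasure X => (μ : Measure X) tᶜ)
        = fun μ : ProbabilityMeasure X => 1 - (μ : Measure X) t := by
      funext μ
      rw [measure_compl ht (measure_ne_top _ _), measure_univ]
    rw [heq]
    exact Measurable.const_sub iht 1
  · intro f hdisj hmeas ihf
    have heq : (fun μ : ProbabilityMeasure X => (μ : Measure X) (⋃ i, f i))
        = fun μ : ProbabilityMeasure X => ∑' i, (μ : Measure X) (f i) := by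
      funext μ
      exact measure_iUnion hdisj hmeas
    rw [heq]
    exact Measurable.ennreal_tsum ihf

end Stmt15

open Stmt15

/-- **Statement 15.** For a Polish space `X` there is a Borel map
`f : P_c(X) × X → [0,1]` such that for every continuous probability measure `μ` on `X`,
the section `f_μ` is a measure preserving bijection between a `μ`-conull Borel set and a
Borel set of full Lebesgue measure in `[0,1]`; in particular `(f_μ)_*μ` is Lebesgue
measure. -/
theorem stmt_15 (X : Type) [TopologicalSpace X] [PolishSpace X]
    [MeasurableSpace X] [BorelSpace X] :
    letI : MeasurableSpace (ProbabilityMeasure X) := borel (ProbabilityMeasure X)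
    ∃ f : {m : ProbabilityMeasure X // ∀ x : X, (m : Measure X) {x} = 0} × X → unitInterval,
      Measurable f ∧
      ∀ m : {m : ProbabilityMeasure X // ∀ x : X, (m : Measure X) {x} = 0},
        ∃ (X₀ : Set X) (J : Set unitInterval),
          MeasurableSet X₀ ∧ MeasurableSet J ∧
          (m.1 : Measure X) X₀ᶜ = 0 ∧ lebI Jᶜ = 0 ∧
          Set.BijOn (fun x => f (m, x)) X₀ J ∧
          Measure.map (fun x => f (m, x)) (m.1 : Measure X) = lebI := by
  letI : MeasurableSpace (ProbabilityMeasure X) := borel (ProbabilityMeasure X)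
  obtain ⟨g, hg⟩ := exists_measurableEmbedding_real X
  set Pc := {m : ProbabilityMeasure X // ∀ x : X, (m : Measure X) {x} = 0} with hPc
  let E : Pc × X → ℝ≥0∞ := fun p => (p.1.1 : Measure X) (g ⁻¹' (Iic (g p.2)))
  have hE : Measurable E := by
    have hrep : E = fun p => ⨅ q : ℚ,
        (if g p.2 < (q : ℝ) then (p.1.1 : Measure X) (g ⁻¹' Iic ((q : ℝ))) else 1) := by
      funext p
      show (p.1.1 : Measure X) (g ⁻¹' Iic (g p.2)) = _
      apply le_antisymm
      · refine le_iInf fun q => ?_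
        by_cases hq : g p.2 < (q : ℝ)
        · rw [if_pos hq]
          exact measure_mono (preimage_mono (Iic_subset_Iic.2 hq.le))
        · rw [if_neg hq]
          exact prob_le_one
      · obtain ⟨q0, hq0⟩ := exists_rat_gt (g p.2)
        haveI : Nonempty {q : ℚ // g p.2 < (q : ℝ)} := ⟨⟨q0, hq0⟩⟩
        have hint : (⋂ q : {q : ℚ // g p.2 < (q : ℝ)}, g ⁻¹' Iic ((q : ℚ) : ℝ))
            = g ⁻¹' Iic (g p.2) := by
          ext x
          simp only [mem_iInter, mem_preimage, mem_Iic, Subtype.forall]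
          constructor
          · intro h
            by_contra hgt
            push_neg at hgt
            obtain ⟨q, hq1, hq2⟩ := exists_rat_btwn hgt
            exact absurd (h q hq1) (not_le.2 hq2)
          · intro h q hq
            exact h.trans hq.le
        have hdir : Directed (fun (x1 x2 : Set X) => x1 ⊇ x2)
            (fun q : {q : ℚ // g p.2 < (q : ℝ)} => g ⁻¹' Iic ((q : ℚ) : ℝ)) := by
          rintro ⟨q1, h1⟩ ⟨q2, h2⟩
          refine ⟨⟨min q1 q2, by push_cast; exact lt_min h1 h2⟩, ?_, ?_⟩
          · exact preimage_mono (Iic_subset_Iic.2 (by push_cast; exact min_le_left _ _))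
          · exact preimage_mono (Iic_subset_Iic.2 (by push_cast; exact min_le_right _ _))
        rw [← hint, Directed.measure_iInter
          (fun q => (hg.measurable measurableSet_Iic).nullMeasurableSet) hdir
          ⟨Classical.arbitrary _, measure_ne_top _ _⟩]
        refine le_iInf fun q => iInf_le_of_le (q : ℚ) ?_
        exact le_of_eq (if_pos q.2)
    rw [hrep]
    refine Measurable.iInf fun q => Measurable.ite ?_ ?_ measurable_const
    · exact measurableSet_lt (hg.measurable.comp measurable_snd) measurable_const
    · exact (measurable_eval (hg.measurable measurableSet_Iic)).comp
        (measurable_subtype_coe.comp measurable_fst)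
  set f : Pc × X → unitInterval := fun p => toI (E p).toReal with hfdef
  have hf : Measurable f := measurable_toI.comp hE.ennreal_toReal
  refine ⟨f, hf, fun m => ?_⟩
  haveI : IsProbabilityMeasure (m.1 : Measure X) := m.1.2
  set ν : Measure ℝ := Measure.map g (m.1 : Measure X) with hν
  haveI : IsProbabilityMeasure ν := Measure.isProbabilityMeasure_map hg.measurable.aemeasurable
  haveI : NullSingletonClass ν := by
    constructor
    intro t
    rw [hν, hg.map_apply]
    have hss : (g ⁻¹' {t}).Subsingleton := by
      intro a ha b hb
      simp only [mem_preimage, mem_singleton_iff] at ha hb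
      exact hg.injective (by rw [ha, hb])
    rcases hss.eq_empty_or_singleton with h | ⟨x, h⟩
    · rw [h]; simp
    · rw [h]; exact m.2 x
  have hfm : (fun x => f (m, x)) = (fun t => toI (cdf ν t)) ∘ g := by
    funext x
    simp only [hfdef, Function.comp_apply]
    congr 1
    rw [cdf_eq_real, measureReal_def, hν, hg.map_apply]
  have hcdfmeas : Measurable fun t => toI (cdf ν t) :=
    measurable_toI.comp (cdf ν).mono.measurable
  have hfmmeas : Measurable fun x => f (m, x) :=
    hf.comp (measurable_const.prodMk measurable_id)
  have hmap : Measure.map (fun x => f (m, x)) (m.1 : Measure X) = lebI := by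
    rw [hfm, ← Measure.map_map hcdfmeas hg.measurable]
    exact map_cdf ν
  set N : Set ℝ := ⋃ q : ℚ, ((fun t => toI (cdf ν t)) ⁻¹' {toI (cdf ν (q : ℝ))} \ {(q : ℝ)})
    with hNdef
  have hNmeas : MeasurableSet N :=
    MeasurableSet.iUnion fun q =>
      (hcdfmeas (measurableSet_singleton _)).diff (measurableSet_singleton _)
  have hNnull : ν N = 0 := by
    refine measure_iUnion_null fun q => measure_mono_null diff_subset ?_
    rw [← Measure.map_apply hcdfmeas (measurableSet_singleton _), map_cdf]
    exact lebI_singleton _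
  have hmemI : ∀ t, cdf ν t ∈ Icc (0:ℝ) 1 := fun t => ⟨cdf_nonneg ν t, cdf_le_one ν t⟩
  have key : ∀ a b : ℝ, a < b → toI (cdf ν a) = toI (cdf ν b) → a ∈ N := by
    intro a b hab hEq
    have hcdfeq : cdf ν a = cdf ν b := toI_inj (hmemI a) (hmemI b) hEq
    obtain ⟨q, hq1, hq2⟩ := exists_rat_btwn hab
    have hq : cdf ν (q : ℝ) = cdf ν a := by
      refine le_antisymm ?_ ((cdf ν).mono hq1.le)
      rw [hcdfeq]
      exact (cdf ν).mono hq2.le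
    refine mem_iUnion.2 ⟨q, ⟨?_, ?_⟩⟩
    · simp only [mem_preimage, mem_singleton_iff]
      rw [hq]
    · simp only [mem_singleton_iff]
      exact ne_of_lt hq1
  have hinjF : InjOn (fun t => toI (cdf ν t)) Nᶜ := by
    intro t1 h1 t2 h2 heq
    rcases lt_trichotomy t1 t2 with hlt | heqt | hgt
    · exact absurd (key t1 t2 hlt heq) h1
    · exact heqt
    · exact absurd (key t2 t1 hgt heq.symm) h2
  set X₀ : Set X := g ⁻¹' Nᶜ with hX₀def
  have hX₀meas : MeasurableSet X₀ := hg.measurable hNmeas.compl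
  have hX₀null : (m.1 : Measure X) X₀ᶜ = 0 := by
    have : X₀ᶜ = g ⁻¹' N := by
      rw [hX₀def, ← preimage_compl, compl_compl]
    rw [this, ← hg.map_apply, ← hν]
    exact hNnull
  have hinj : InjOn (fun x => f (m, x)) X₀ := by
    intro x1 hx1 x2 hx2 heq
    rw [hfm] at heq
    exact hg.injective (hinjF hx1 hx2 heq)
  set J : Set unitInterval := (fun x => f (m, x)) '' X₀ with hJdef
  have hJmeas : MeasurableSet J := hX₀meas.image_of_measurable_injOn hfmmeas hinj
  have hJnull : lebI Jᶜ = 0 := by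
    rw [← hmap, Measure.map_apply hfmmeas hJmeas.compl]
    refine measure_mono_null ?_ hX₀null
    intro x hx
    simp only [mem_preimage, mem_compl_iff] at hx ⊢
    intro hxX₀
    exact hx (mem_image_of_mem _ hxX₀)
  exact ⟨X₀, J, hX₀meas, hJmeas, hX₀null, hJnull, hinj.bijOn_image, hmap⟩
end
end

section
/- Code countably infinite abelian groups as the Polish space Abel_{ℵ₀} of pairs (·,e) ∈ ℕ^{ℕ×ℕ} × ℕ satisfying the abelian group axioms, and for G ∈ Abel_{ℵ₀} let Char(G) ⊆ 𝕋^ℕ be the compact group of characters of G, i.e., all x ∈ 𝕋^ℕ with x(g₁ ·_G g₂) = x(g₁)x(g₂) for all g₁,g₂ ∈ ℕ. Then the map H : Abel_{ℵ₀} → P(𝕋^ℕ) which assigns to G the normalized Haar measure of the compact group Char(G) (viewed as a Borel probability measure on 𝕋^ℕ concentrated on Char(G)) is Borel, where P(𝕋^ℕ) carries the weak topology. -/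
open MeasureTheory

noncomputable section

/-- Borel structure on the circle group. -/
instance : MeasurableSpace Circle := borel Circle
instance : BorelSpace Circle := ⟨rfl⟩

/-- The codes for countably infinite abelian groups: pairs `(·, e) ∈ ℕ^(ℕ×ℕ) × ℕ`. -/
abbrev AbelCodeSpace : Type := (ℕ × ℕ → ℕ) × ℕ

/-- `p` codes an abelian group structure on `ℕ`. -/
def IsAbelCode (p : AbelCodeSpace) : Prop :=
  (∀ i j k : ℕ, p.1 (p.1 (i, j), k) = p.1 (i, p.1 (j, k))) ∧
  (∀ j : ℕ, p.1 (p.2, j) = j) ∧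
  (∀ k : ℕ, ∃ l : ℕ, p.1 (k, l) = p.2) ∧
  (∀ i j : ℕ, p.1 (i, j) = p.1 (j, i))

/-- The Polish space `Abel_{ℵ₀}` of countably infinite abelian groups. -/
abbrev AbelAleph0 : Type := {p : AbelCodeSpace // IsAbelCode p}

/-- The characters of the coded group `G`: the compact subgroup of `𝕋^ℕ` of all `x` with
`x(g₁ ·_G g₂) = x(g₁)x(g₂)`. -/
def CharSet (G : AbelAleph0) : Set (ℕ → Circle) :=
  {x : ℕ → Circle | ∀ i j : ℕ, x (G.1.1 (i, j)) = x i * x j}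


open scoped Classical NNReal BoundedContinuousFunction

abbrev TT : Type := ℕ → Circle

example : CompactSpace TT := inferInstance
example : SecondCountableTopology Circle := inferInstance
example : BorelSpace TT := inferInstance
example : Countable (ℕ →₀ ℤ) := inferInstance
example : MetricSpace C(TT, ℂ) := inferInstance

def charF (n : ℕ →₀ ℤ) : TT → Circle := fun x => ∏ i ∈ n.support, x i ^ n i

lemma charF_continuous (n : ℕ →₀ ℤ) : Continuous (charF n) := by
  apply continuous_finset_prod
  intro i _
  exact (continuous_apply i).zpow _

lemma charF_eq_finsupp_prod (n : ℕ →₀ ℤ) (x : TT) : charF n x = n.prod fun i k => x i ^ k := rfl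

lemma charF_add (n m : ℕ →₀ ℤ) (x : TT) : charF (n + m) x = charF n x * charF m x := by
  simp only [charF_eq_finsupp_prod]
  exact Finsupp.prod_add_index' (fun a => zpow_zero _) (fun a b c => zpow_add _ _ _)

lemma charF_zero (x : TT) : charF 0 x = 1 := by simp [charF]

lemma charF_neg (n : ℕ →₀ ℤ) (x : TT) : charF (-n) x = (charF n x)⁻¹ := by
  simp [charF, ← Finset.prod_inv_distrib, zpow_neg]

lemma charF_mulpt (n : ℕ →₀ ℤ) (y x : TT) :
    charF n (fun i => y i * x i) = charF n y * charF n x := by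
  simp [charF, ← Finset.prod_mul_distrib, mul_zpow]

lemma charF_single (i : ℕ) (x : TT) : charF (Finsupp.single i 1) x = x i := by
  rw [charF, Finsupp.support_single_ne_zero i one_ne_zero]
  simp

/-- The monomial as a continuous complex-valued function. -/
def cchar (n : ℕ →₀ ℤ) : C(TT, ℂ) := ⟨fun x => (charF n x : ℂ), continuous_induced_dom.comp (charF_continuous n)⟩

lemma cchar_mul (n m : ℕ →₀ ℤ) : cchar n * cchar m = cchar (n + m) := by
  ext x; simp [cchar, charF_add]

lemma cchar_zero : cchar 0 = 1 := by ext x; simp [cchar, charF_zero]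

lemma star_cchar (n : ℕ →₀ ℤ) : star (cchar n) = cchar (-n) := by
  ext x
  simp only [cchar, ContinuousMap.star_apply, ContinuousMap.coe_mk, charF_neg]
  rw [Circle.coe_inv_eq_conj]
  rfl

/-- The monomials form a multiplicative monoid in `C(TT, ℂ)`. -/
def ccharHom : Multiplicative (ℕ →₀ ℤ) →* C(TT, ℂ) where
  toFun := fun n => cchar n.toAdd
  map_one' := cchar_zero
  map_mul' := fun n m => (cchar_mul _ _).symm

lemma mrange_ccharHom : (MonoidHom.mrange ccharHom : Set C(TT, ℂ)) = Set.range cchar := by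
  ext f
  constructor
  · rintro ⟨n, rfl⟩; exact ⟨n.toAdd, rfl⟩
  · rintro ⟨n, rfl⟩; exact ⟨Multiplicative.ofAdd n, rfl⟩

/-- The star subalgebra generated by the monomials. -/
def SA : StarSubalgebra ℂ C(TT, ℂ) where
  toSubalgebra := Algebra.adjoin ℂ (Set.range cchar)
  star_mem' := by
    intro a ha
    induction ha using Algebra.adjoin_induction with
    | mem f hf =>
      obtain ⟨n, rfl⟩ := hf
      rw [star_cchar]
      exact Algebra.subset_adjoin ⟨-n, rfl⟩
    | algebraMap r =>
      rw [← algebraMap_star_comm]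
      exact Subalgebra.algebraMap_mem _ _
    | add a b _ _ ha hb =>
      have ha' : star a ∈ Algebra.adjoin ℂ (Set.range cchar) := ha
      have hb' : star b ∈ Algebra.adjoin ℂ (Set.range cchar) := hb
      rw [star_add]; exact add_mem ha' hb'
    | mul a b _ _ ha hb =>
      have ha' : star a ∈ Algebra.adjoin ℂ (Set.range cchar) := ha
      have hb' : star b ∈ Algebra.adjoin ℂ (Set.range cchar) := hb
      rw [star_mul]; exact mul_mem hb' ha'

lemma SA_carrier_eq_span :
    (Subalgebra.toSubmodule SA.toSubalgebra : Submodule ℂ C(TT, ℂ))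
      = Submodule.span ℂ (Set.range cchar) := by
  show Subalgebra.toSubmodule (Algebra.adjoin ℂ (Set.range cchar)) = _
  rw [Algebra.adjoin_eq_span, ← mrange_ccharHom, Submonoid.closure_eq, mrange_ccharHom]

lemma SA_dense : SA.topologicalClosure = ⊤ := by
  apply ContinuousMap.starSubalgebra_topologicalClosure_eq_top_of_separatesPoints
  intro x y hxy
  obtain ⟨i, hi⟩ : ∃ i, x i ≠ y i := by
    by_contra h
    push_neg at h
    exact hxy (funext h)
  refine ⟨_, ⟨cchar (Finsupp.single i 1), Algebra.subset_adjoin ⟨_, rfl⟩, rfl⟩, ?_⟩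
  simp only [cchar, ContinuousMap.coe_mk, charF_single]
  exact fun h => hi (Circle.coe_injective h)

lemma exists_seq_span_tendsto (F : C(TT, ℂ)) :
    ∃ p : ℕ → C(TT, ℂ), (∀ j, p j ∈ Submodule.span ℂ (Set.range cchar)) ∧
      Filter.Tendsto p Filter.atTop (nhds F) := by
  have hF : F ∈ closure (SA : Set C(TT, ℂ)) := by
    have : F ∈ SA.topologicalClosure := by rw [SA_dense]; trivial
    exact this
  obtain ⟨p, hp, hlim⟩ := mem_closure_iff_seq_limit.1 hF
  refine ⟨p, fun j => ?_, hlim⟩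
  have := hp j
  rw [← SA_carrier_eq_span]
  exact this


lemma isClosed_charSet (G : AbelAleph0) : IsClosed (CharSet G) := by
  have : CharSet G = ⋂ i, ⋂ j, {x : TT | x (G.1.1 (i, j)) = x i * x j} := by
    ext x; simp [CharSet, Set.mem_iInter]
  rw [this]
  refine isClosed_iInter fun i => isClosed_iInter fun j => ?_
  exact isClosed_eq (continuous_apply _) ((continuous_apply i).mul (continuous_apply j))

lemma integral_cchar (G : AbelAleph0) (μ : Measure TT) [IsProbabilityMeasure μ]
    (hconc : μ (CharSet G) = 1)
    (hinv : ∀ χ ∈ CharSet G, Measure.map (fun x n => χ n * x n) μ = μ) (n : ℕ →₀ ℤ) :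
    ∫ x, cchar n x ∂μ = if ∀ x ∈ CharSet G, charF n x = 1 then 1 else 0 := by
  classical
  split_ifs with h
  · have hae : ∀ᵐ x ∂μ, x ∈ CharSet G := by
      rw [MeasureTheory.ae_iff]
      have := measure_compl (μ := μ) (isClosed_charSet G).measurableSet (by rw [hconc]; exact ENNReal.one_ne_top)
      rw [hconc, measure_univ] at this
      simp at this; exact this
    have : ∫ x, cchar n x ∂μ = ∫ _x, (1 : ℂ) ∂μ := by
      refine integral_congr_ae ?_
      filter_upwards [hae] with x hx
      simp [cchar, h x hx]
    rw [this]
    simp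
  · push_neg at h
    obtain ⟨x₀, hx₀, hne⟩ := h
    have hT : Continuous fun (x : TT) (m : ℕ) => x₀ m * x m :=
      continuous_pi fun m => continuous_const.mul (continuous_apply m)
    have key : ∫ x, cchar n x ∂μ = (charF n x₀ : ℂ) * ∫ x, cchar n x ∂μ := by
      conv_lhs => rw [← hinv x₀ hx₀]
      rw [integral_map hT.aemeasurable (cchar n).continuous.aestronglyMeasurable]
      simp only [cchar, ContinuousMap.coe_mk, charF_mulpt]
      push_cast
      rw [integral_const_mul]
    have : ((charF n x₀ : ℂ) - 1) * ∫ x, cchar n x ∂μ = 0 := by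
      rw [sub_mul, one_mul, ← key, sub_self]
    rcases mul_eq_zero.1 this with h1 | h2
    · exfalso
      apply hne
      have : (charF n x₀ : ℂ) = 1 := by linear_combination h1
      exact Circle.coe_injective (by simpa using this)
    · exact h2

lemma isClosed_Z : IsClosed {p : AbelAleph0 × TT | p.2 ∈ CharSet p.1} := by
  have : {p : AbelAleph0 × TT | p.2 ∈ CharSet p.1}
      = ⋂ i, ⋂ j, {p : AbelAleph0 × TT | p.2 (p.1.1.1 (i, j)) = p.2 i * p.2 j} := by
    ext p; simp [CharSet, Set.mem_iInter]
  rw [this]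
  refine isClosed_iInter fun i => isClosed_iInter fun j => ?_
  rw [← isOpen_compl_iff]
  have : {p : AbelAleph0 × TT | p.2 (p.1.1.1 (i, j)) = p.2 i * p.2 j}ᶜ
      = ⋃ m : ℕ, ({G : AbelAleph0 | G.1.1 (i, j) = m} ×ˢ {x : TT | x m ≠ x i * x j}) := by
    ext p
    constructor
    · intro hp
      exact Set.mem_iUnion.2 ⟨p.1.1.1 (i, j), ⟨rfl, hp⟩⟩
    · intro hp
      obtain ⟨m, hm, hx⟩ := Set.mem_iUnion.1 hp
      intro hc
      exact hx (by rw [← hm] at hx ⊢; exact hc)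
  rw [this]
  refine isOpen_iUnion fun m => IsOpen.prod ?_ ?_
  · have hcont : Continuous fun G : AbelAleph0 => G.1.1 (i, j) :=
      (continuous_apply (i, j)).comp (continuous_fst.comp continuous_subtype_val)
    exact hcont.isOpen_preimage {m} (isOpen_discrete _)
  · rw [← isClosed_compl_iff]
    have : {x : TT | x m ≠ x i * x j}ᶜ = {x : TT | x m = x i * x j} := by
      ext x; simp
    rw [this]
    exact isClosed_eq (continuous_apply m) ((continuous_apply i).mul (continuous_apply j))

lemma measurableSet_B (n : ℕ →₀ ℤ) :
    MeasurableSet[borel AbelAleph0] {G : AbelAleph0 | ∀ x ∈ CharSet G, charF n x = 1} := by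
  letI : MeasurableSpace AbelAleph0 := borel AbelAleph0
  haveI : BorelSpace AbelAleph0 := ⟨rfl⟩
  have hD : ∀ m : ℕ, IsClosed {p : AbelAleph0 × TT |
      (1 : ℝ) / (m + 1) ≤ dist (charF n p.2) (1 : Circle)} := by
    intro m
    apply isClosed_le continuous_const
    exact (continuous_dist.comp (((charF_continuous n).comp continuous_snd).prodMk
      continuous_const))
  have key : {G : AbelAleph0 | ∀ x ∈ CharSet G, charF n x = 1}ᶜ
      = ⋃ m : ℕ, Prod.fst '' ({p : AbelAleph0 × TT | p.2 ∈ CharSet p.1} ∩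
          {p : AbelAleph0 × TT | (1 : ℝ) / (m + 1) ≤ dist (charF n p.2) (1 : Circle)}) := by
    ext G
    simp only [Set.mem_compl_iff, Set.mem_setOf_eq, not_forall, Set.mem_iUnion, Set.mem_image]
    constructor
    · rintro ⟨x, hx, hne⟩
      have hd : 0 < dist (charF n x) (1 : Circle) := dist_pos.2 hne
      obtain ⟨m, hm⟩ := exists_nat_one_div_lt hd
      exact ⟨m, (G, x), ⟨hx, le_of_lt hm⟩, rfl⟩
    · rintro ⟨m, ⟨G', x⟩, ⟨hmem, hdist⟩, rfl⟩
      refine ⟨x, hmem, ?_⟩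
      intro hc
      simp only [Set.mem_setOf_eq] at hdist
      rw [hc, dist_self] at hdist
      have : (0:ℝ) < 1 / (m + 1) := by positivity
      linarith
  have : MeasurableSet ({G : AbelAleph0 | ∀ x ∈ CharSet G, charF n x = 1}ᶜ) := by
    rw [key]
    refine MeasurableSet.iUnion fun m => ?_
    have hclosed : IsClosed (Prod.fst '' ({p : AbelAleph0 × TT | p.2 ∈ CharSet p.1} ∩
        {p : AbelAleph0 × TT | (1 : ℝ) / (m + 1) ≤ dist (charF n p.2) (1 : Circle)})) :=
      isClosedMap_fst_of_compactSpace _ (isClosed_Z.inter (hD m))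
    exact hclosed.measurableSet
  simpa using this.compl

lemma cont_integrable {E : Type*} [NormedAddCommGroup E] [NormedSpace ℝ E]
    {f : TT → E} (hf : Continuous f) (μ : Measure TT) [IsFiniteMeasure μ] :
    Integrable f μ :=
  hf.integrable_of_hasCompactSupport
    (IsCompact.of_isClosed_subset isCompact_univ (isClosed_tsupport f) (Set.subset_univ _))

/-- The Fourier-coefficient map on probability measures. -/
def Phi (μ : ProbabilityMeasure TT) : (ℕ →₀ ℤ) → ℂ :=
  fun n => ∫ x, cchar n x ∂(μ : Measure TT)

/-- Type synonym carrying the topology induced by `Phi`. -/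
def WP : Type := ProbabilityMeasure TT

def WP.toP : WP → ProbabilityMeasure TT := id

instance : TopologicalSpace WP :=
  TopologicalSpace.induced (fun μ : WP => Phi (WP.toP μ)) inferInstance

lemma continuous_phi_eval (n : ℕ →₀ ℤ) : Continuous fun μ : WP => Phi (WP.toP μ) n := by
  have h1 : Continuous fun μ : WP => Phi (WP.toP μ) := continuous_induced_dom
  exact (continuous_apply n).comp h1

lemma continuous_integral_span {p : C(TT, ℂ)} (hp : p ∈ Submodule.span ℂ (Set.range cchar)) :
    Continuous fun μ : WP => ∫ x, p x ∂((WP.toP μ : ProbabilityMeasure TT) : Measure TT) := by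
  obtain ⟨a, ha⟩ := (Finsupp.mem_span_range_iff_exists_finsupp).1 hp
  have : ∀ μ : WP, ∫ x, p x ∂((WP.toP μ : ProbabilityMeasure TT) : Measure TT)
      = a.sum fun n c => c * Phi (WP.toP μ) n := by
    intro μ
    rw [← ha]
    have : ∀ x : TT, (a.sum fun n c => c • cchar n) x = ∑ n ∈ a.support, a n * cchar n x := by
      intro x
      rw [Finsupp.sum]
      simp [ContinuousMap.coe_sum, Finset.sum_apply]
    rw [MeasureTheory.integral_congr_ae (Filter.Eventually.of_forall this)]
    rw [MeasureTheory.integral_finset_sum _ (fun n _ =>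
      (cont_integrable (f := fun x => a n * cchar n x) (continuous_const.mul (cchar n).continuous) _))]
    rw [Finsupp.sum]
    refine Finset.sum_congr rfl fun n _ => ?_
    rw [integral_const_mul]
    rfl
  simp only [this]
  apply continuous_finset_sum
  intro n _
  exact continuous_const.mul (continuous_phi_eval n)

lemma continuous_testAgainstNN (f : TT →ᵇ ℝ≥0) :
    Continuous fun μ : WP =>
      ((WP.toP μ : ProbabilityMeasure TT).toFiniteMeasure.testAgainstNN f) := by
  have Fc : Continuous fun x : TT => ((f x : ℝ) : ℂ) :=
    Complex.continuous_ofReal.comp (NNReal.continuous_coe.comp f.continuous)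
  set F : C(TT, ℂ) := ⟨fun x => ((f x : ℝ) : ℂ), Fc⟩ with hF
  obtain ⟨p, hpmem, hplim⟩ := exists_seq_span_tendsto F
  set g : ℕ → WP → ℝ≥0 := fun j μ =>
    Real.toNNReal ((∫ x, p j x ∂((WP.toP μ : ProbabilityMeasure TT) : Measure TT)).re) with hg
  have hgcont : ∀ j, Continuous (g j) := fun j =>
    continuous_real_toNNReal.comp (Complex.continuous_re.comp (continuous_integral_span (hpmem j)))
  have hT : ∀ μ : WP, ((WP.toP μ : ProbabilityMeasure TT).toFiniteMeasure.testAgainstNN f)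
      = Real.toNNReal ((∫ x, F x ∂((WP.toP μ : ProbabilityMeasure TT) : Measure TT)).re) := by
    intro μ
    have hint : Integrable (fun x => (f x : ℝ)) ((WP.toP μ : ProbabilityMeasure TT) : Measure TT) :=
      cont_integrable (NNReal.continuous_coe.comp f.continuous) _
    have h1 : (∫ x, F x ∂((WP.toP μ : ProbabilityMeasure TT) : Measure TT))
        = ((∫ x, (f x : ℝ) ∂((WP.toP μ : ProbabilityMeasure TT) : Measure TT) : ℝ) : ℂ) :=
      integral_ofReal
    rw [h1]
    show (∫⁻ ω, f ω ∂((WP.toP μ : ProbabilityMeasure TT) : Measure TT)).toNNReal = _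
    rw [lintegral_coe_eq_integral _ hint]
    simp [ENNReal.ofReal, Complex.ofReal_re]
  have hunif : TendstoUniformly g
      (fun μ : WP => ((WP.toP μ : ProbabilityMeasure TT).toFiniteMeasure.testAgainstNN f))
      Filter.atTop := by
    rw [Metric.tendstoUniformly_iff]
    intro ε hε
    have hnorm : Filter.Tendsto (fun j => ‖p j - F‖) Filter.atTop (nhds 0) := by
      have : Filter.Tendsto (fun j => dist (p j) F) Filter.atTop (nhds (dist F F)) :=
        (Filter.Tendsto.dist hplim tendsto_const_nhds)
      simpa [dist_eq_norm] using this
    have : ∀ᶠ j in Filter.atTop, ‖p j - F‖ < ε := by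
      have := hnorm.eventually (eventually_lt_nhds hε)
      simpa using this
    filter_upwards [this] with j hj μ
    rw [hT]
    have hle : dist
        (Real.toNNReal ((∫ x, F x ∂((WP.toP μ : ProbabilityMeasure TT) : Measure TT)).re))
        (Real.toNNReal ((∫ x, p j x ∂((WP.toP μ : ProbabilityMeasure TT) : Measure TT)).re))
        ≤ ‖p j - F‖ := by
      refine le_trans (Real.lipschitzWith_toNNReal.dist_le_mul _ _) ?_
      rw [NNReal.coe_one, one_mul, Real.dist_eq]
      have h2 : |(∫ x, F x ∂((WP.toP μ : ProbabilityMeasure TT) : Measure TT)).re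
          - (∫ x, p j x ∂((WP.toP μ : ProbabilityMeasure TT) : Measure TT)).re|
          ≤ ‖(∫ x, F x ∂((WP.toP μ : ProbabilityMeasure TT) : Measure TT))
            - (∫ x, p j x ∂((WP.toP μ : ProbabilityMeasure TT) : Measure TT))‖ := by
        rw [← Complex.sub_re]
        exact Complex.abs_re_le_norm _
      refine le_trans h2 ?_
      rw [← MeasureTheory.integral_sub (cont_integrable F.continuous _)
        (cont_integrable (p j).continuous _)]
      have h3 : ‖∫ x, (F x - p j x) ∂((WP.toP μ : ProbabilityMeasure TT) : Measure TT)‖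
          ≤ ‖p j - F‖ * (((WP.toP μ : ProbabilityMeasure TT) : Measure TT) Set.univ).toReal := by
        apply norm_integral_le_of_norm_le_const
        refine Filter.Eventually.of_forall fun x => ?_
        have : F x - p j x = -((p j - F) x) := by simp
        rw [this, norm_neg]
        exact ContinuousMap.norm_coe_le_norm _ x
      simpa using h3
    exact lt_of_le_of_lt hle hj
  exact hunif.continuous (Filter.Eventually.of_forall hgcont).frequently

lemma continuous_toP : Continuous WP.toP := by
  apply continuous_induced_rng.2
  apply continuous_induced_rng.2
  apply WeakDual.continuous_of_continuous_eval
  intro f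
  exact continuous_testAgainstNN f

lemma borel_le_comap :
    borel (ProbabilityMeasure TT) ≤
      MeasurableSpace.comap Phi (MeasurableSpace.pi (X := fun _ : (ℕ →₀ ℤ) => ℂ)) := by
  have h1 : borel (ProbabilityMeasure TT) ≤ borel WP := by
    apply MeasurableSpace.generateFrom_le
    intro U hU
    exact MeasurableSpace.measurableSet_generateFrom (continuous_toP.isOpen_preimage U hU)
  have h2 : borel WP = MeasurableSpace.comap (fun μ : WP => Phi (WP.toP μ))
      (borel ((ℕ →₀ ℤ) → ℂ)) := borel_comap
  have h3 : (borel ((ℕ →₀ ℤ) → ℂ)) = MeasurableSpace.pi :=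
    (BorelSpace.measurable_eq (α := (ℕ →₀ ℤ) → ℂ)).symm
  rw [h2, h3] at h1
  exact h1


/-- **Statement 16.** The map `H : Abel_{ℵ₀} → P(𝕋^ℕ)` assigning to `G` the normalized
Haar measure of the compact group `Char(G)` — i.e. the unique Borel probability measure
concentrated on `Char(G)` and invariant under translation by every element of `Char(G)` —
is Borel (with respect to the weak topology on `P(𝕋^ℕ)`). -/
theorem stmt_16 :
    letI : MeasurableSpace (ProbabilityMeasure (ℕ → Circle)) :=
      borel (ProbabilityMeasure (ℕ → Circle))
    ∀ H : AbelAleph0 → ProbabilityMeasure (ℕ → Circle),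
      (∀ G : AbelAleph0,
        (H G : Measure (ℕ → Circle)) (CharSet G) = 1 ∧
        ∀ χ : ℕ → Circle, χ ∈ CharSet G →
          Measure.map (fun x n => χ n * x n) (H G : Measure (ℕ → Circle)) =
            (H G : Measure (ℕ → Circle))) →
      @Measurable _ _ (borel AbelAleph0) _ H := by
  intro H hH
  letI : MeasurableSpace AbelAleph0 := borel AbelAleph0
  have hPhiH : Measurable fun G : AbelAleph0 => Phi (H G) := by
    apply measurable_pi_lambda
    intro n
    have heq : (fun G : AbelAleph0 => Phi (H G) n)
        = fun G : AbelAleph0 => if ∀ x ∈ CharSet G, charF n x = 1 then (1:ℂ) else 0 := by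
      funext G
      exact integral_cchar G (H G : Measure TT) (hH G).1 (hH G).2 n
    rw [heq]
    exact Measurable.ite (measurableSet_B n) measurable_const measurable_const
  intro s hs
  obtain ⟨t, ht, rfl⟩ := borel_le_comap s hs
  exact hPhiH ht
end
end

section
/- Let X, Y, Z be Polish spaces and let f : X × Y → Z be a Borel map. Then the map f* : X × P(Y) → P(Z) defined by f*(x,μ) = (f_x)_*μ, the pushforward of μ under the section f_x : Y → Z, y ↦ f(x,y), is Borel, where P(Y) and P(Z) carry the weak topology. -/
open MeasureTheory

noncomputable section

namespace Stmt17Aux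

open Filter Topology Set Metric BoundedContinuousFunction TopologicalSpace
open scoped NNReal ENNReal

/-- Integral of `1 - φ` against a probability measure. -/
lemma lintegral_one_sub {Ω : Type} [MeasurableSpace Ω] (μ : Measure Ω) [IsProbabilityMeasure μ]
    {φ : Ω → ℝ≥0∞} (hφm : Measurable φ) (hφ1 : ∀ z, φ z ≤ 1) :
    ∫⁻ z, (1 - φ z) ∂μ = 1 - ∫⁻ z, φ z ∂μ := by
  have hfin : ∫⁻ z, φ z ∂μ ≠ ∞ := by
    refine ne_top_of_le_ne_top (by simp : (1 : ℝ≥0∞) ≠ ∞) ?_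
    calc ∫⁻ z, φ z ∂μ ≤ ∫⁻ _, 1 ∂μ := lintegral_mono hφ1
      _ = 1 := by simp
  have h := lintegral_sub hφm hfin (Filter.Eventually.of_forall hφ1) (f := fun _ => (1 : ℝ≥0∞))
  simpa using h

/-- The core construction: a countable family of `[0,1]`-valued bounded continuous functions on a
second countable metric space which recovers the measure of every open set from below. -/
lemma core (Z : Type) [MetricSpace Z] [SecondCountableTopology Z] [MeasurableSpace Z]
    [OpensMeasurableSpace Z] :
    ∃ g : Finset ℕ × ℕ → (Z →ᵇ ℝ≥0),
      (∀ p z, ((g p z : ℝ≥0) : ℝ≥0∞) ≤ 1) ∧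
      (∀ G : Set Z, IsOpen G → ∀ μ : Measure Z, IsProbabilityMeasure μ →
        μ G = ⨆ p : {p : Finset ℕ × ℕ //
            ∀ z : Z, (1 : ℝ≥0∞) - ((g p z : ℝ≥0) : ℝ≥0∞) ≤ G.indicator 1 z},
          (1 - ∫⁻ z, ((g (p : Finset ℕ × ℕ) z : ℝ≥0) : ℝ≥0∞) ∂μ)) := by
  classical
  -- enumerate a basis of opens
  obtain ⟨u, u_open, u_cover⟩ : ∃ u : ℕ → Set Z, (∀ n, IsOpen (u n)) ∧
      ∀ G : Set Z, IsOpen G → ∀ x ∈ G, ∃ n, x ∈ u n ∧ u n ⊆ G := by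
    have hb := TopologicalSpace.isBasis_countableBasis Z
    have hc : (insert ∅ (TopologicalSpace.countableBasis Z)).Countable :=
      (TopologicalSpace.countable_countableBasis Z).insert _
    obtain ⟨u, hu⟩ := hc.exists_eq_range (Set.insert_nonempty _ _)
    refine ⟨u, fun n => ?_, fun G hG x hx => ?_⟩
    · have hn : u n ∈ insert ∅ (TopologicalSpace.countableBasis Z) := hu ▸ Set.mem_range_self n
      rcases hn with h | h
      · rw [h]; exact isOpen_empty
      · exact TopologicalSpace.isOpen_of_mem_countableBasis h
    · obtain ⟨v, hv, hxv, hvG⟩ := hb.exists_subset_of_mem_open hx hG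
      have hvr : v ∈ Set.range u := hu ▸ Set.mem_insert_of_mem _ hv
      obtain ⟨n, rfl⟩ := hvr
      exact ⟨n, hxv, hvG⟩
  set W : Finset ℕ → Set Z := fun S => ⋃ i ∈ S, u i with hWdef
  have W_open : ∀ S, IsOpen (W S) := fun S => isOpen_biUnion (fun i _ => u_open i)
  have δpos : ∀ n : ℕ, (0 : ℝ) < 1 / (n + 1) := fun n => by positivity
  set g : Finset ℕ × ℕ → (Z →ᵇ ℝ≥0) :=
    fun p => thickenedIndicator (δpos p.2) (W p.1)ᶜ with hgdef
  have g_le_one : ∀ p z, ((g p z : ℝ≥0) : ℝ≥0∞) ≤ 1 := by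
    intro p z
    have h1 : g p z ≤ 1 := thickenedIndicator_le_one (δpos p.2) (W p.1)ᶜ z
    calc ((g p z : ℝ≥0) : ℝ≥0∞) ≤ ((1 : ℝ≥0) : ℝ≥0∞) := ENNReal.coe_le_coe.mpr h1
      _ = 1 := ENNReal.coe_one
  have g_one : ∀ p (z : Z), z ∉ W p.1 → g p z = 1 := by
    intro p z hz
    exact thickenedIndicator_one (δpos p.2) _ hz
  -- for z in the open set W S, eventually g (S, n) z = 0
  have g_zero : ∀ (S : Finset ℕ) (z : Z), z ∈ W S → ∃ n : ℕ, g (S, n) z = 0 := by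
    intro S z hz
    have hpos : 0 < EMetric.infEdist z (W S)ᶜ := by
      rw [EMetric.infEdist, EMetric.infEdist_pos_iff_notMem_closure]
      rw [(isClosed_compl_iff.mpr (W_open S)).closure_eq]
      simpa using hz
    have : ∃ n : ℕ, ENNReal.ofReal (1 / (n + 1)) ≤ EMetric.infEdist z (W S)ᶜ := by
      rcases eq_or_ne (EMetric.infEdist z (W S)ᶜ) ∞ with h | h
      · exact ⟨0, by rw [h]; exact le_top⟩
      · have hpos' : 0 < (EMetric.infEdist z (W S)ᶜ).toReal :=
          ENNReal.toReal_pos hpos.ne' h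
        obtain ⟨n, hn⟩ := exists_nat_one_div_lt hpos'
        refine ⟨n, ?_⟩
        calc ENNReal.ofReal (1 / (n + 1)) ≤ ENNReal.ofReal ((EMetric.infEdist z (W S)ᶜ).toReal) :=
              ENNReal.ofReal_le_ofReal (by exact_mod_cast hn.le)
          _ = EMetric.infEdist z (W S)ᶜ := ENNReal.ofReal_toReal h
    obtain ⟨n, hn⟩ := this
    refine ⟨n, thickenedIndicator_zero (δpos n) _ ?_⟩
    rw [Metric.mem_thickening_iff_infEdist_lt]
    exact fun h => absurd hn (not_le.mpr h)
  -- antitone in n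
  have g_anti : ∀ (S : Finset ℕ) (z : Z), Antitone fun n => g (S, n) z := by
    intro S z n m hnm
    exact thickenedIndicator_mono (δpos m) (δpos n)
      (by apply one_div_le_one_div_of_le <;> [positivity; exact_mod_cast by omega]) _ z
  -- pointwise sup identity
  have pt_sup : ∀ (S : Finset ℕ) (z : Z),
      (⨆ n : ℕ, ((1 : ℝ≥0∞) - ((g (S, n) z : ℝ≥0) : ℝ≥0∞))) = (W S).indicator 1 z := by
    intro S z
    by_cases hz : z ∈ W S
    · rw [Set.indicator_of_mem hz]
      refine le_antisymm (iSup_le fun n => tsub_le_self) ?_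
      obtain ⟨n, hn⟩ := g_zero S z hz
      refine le_trans ?_ (le_iSup _ n)
      rw [hn]; simp
    · rw [Set.indicator_of_notMem hz]
      refine le_antisymm (iSup_le fun n => ?_) zero_le
      rw [g_one (S, n) z hz]; simp
  refine ⟨g, g_le_one, ?_⟩
  intro G hG μ hμ
  apply le_antisymm
  · -- μ G ≤ iSup
    set SN : ℕ → Finset ℕ := fun N => (Finset.range N).filter (fun n => u n ⊆ G) with hSN
    have hWSG : ∀ N, W (SN N) ⊆ G := by
      intro N
      refine Set.iUnion₂_subset fun i hi => ?_
      exact (Finset.mem_filter.mp hi).2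
    have hmono : Monotone fun N => W (SN N) := by
      intro N M hNM
      refine Set.iUnion₂_subset fun i hi => ?_
      have h1 := Finset.mem_filter.mp hi
      have h2 : i ∈ SN M := Finset.mem_filter.mpr
        ⟨Finset.mem_range.mpr (lt_of_lt_of_le (Finset.mem_range.mp h1.1) hNM), h1.2⟩
      exact Set.subset_biUnion_of_mem h2
    have hunion : (⋃ N, W (SN N)) = G := by
      refine subset_antisymm (Set.iUnion_subset hWSG) fun x hx => ?_
      obtain ⟨n, hxn, hnG⟩ := u_cover G hG x hx
      refine Set.mem_iUnion.mpr ⟨n + 1, ?_⟩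
      exact Set.mem_biUnion
        (Finset.mem_filter.mpr ⟨Finset.mem_range.mpr (Nat.lt_succ_self n), hnG⟩) hxn
    have key : ∀ N, μ (W (SN N)) = ⨆ n : ℕ, (1 - ∫⁻ z, ((g (SN N, n) z : ℝ≥0) : ℝ≥0∞) ∂μ) := by
      intro N
      set T := SN N
      have meas : ∀ n : ℕ, Measurable fun z => (1 : ℝ≥0∞) - ((g (T, n) z : ℝ≥0) : ℝ≥0∞) := by
        intro n
        exact measurable_const.sub
          ((ENNReal.continuous_coe.comp (g (T, n)).continuous).measurable)
      have monot : Monotone fun (n : ℕ) (z : Z) => (1 : ℝ≥0∞) - ((g (T, n) z : ℝ≥0) : ℝ≥0∞) := by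
        intro n m hnm z
        exact tsub_le_tsub_left (ENNReal.coe_le_coe.mpr (g_anti T z hnm)) 1
      calc μ (W T) = ∫⁻ z, (W T).indicator 1 z ∂μ :=
            (lintegral_indicator_one (W_open T).measurableSet).symm
        _ = ∫⁻ z, ⨆ n : ℕ, ((1 : ℝ≥0∞) - ((g (T, n) z : ℝ≥0) : ℝ≥0∞)) ∂μ := by
            refine lintegral_congr fun z => ?_
            rw [pt_sup T z]
        _ = ⨆ n : ℕ, ∫⁻ z, ((1 : ℝ≥0∞) - ((g (T, n) z : ℝ≥0) : ℝ≥0∞)) ∂μ :=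
            lintegral_iSup meas monot
        _ = ⨆ n : ℕ, (1 - ∫⁻ z, ((g (T, n) z : ℝ≥0) : ℝ≥0∞) ∂μ) := by
            refine iSup_congr fun n => ?_
            exact lintegral_one_sub μ
              ((ENNReal.continuous_coe.comp (g (T, n)).continuous).measurable)
              (g_le_one (T, n))
    calc μ G = μ (⋃ N, W (SN N)) := by rw [hunion]
      _ = ⨆ N, μ (W (SN N)) := Directed.measure_iUnion hmono.directed_le
      _ ≤ _ := by
          refine iSup_le fun N => ?_
          rw [key N]
          refine iSup_le fun n => ?_
          have hcond : ∀ z : Z, (1 : ℝ≥0∞) - ((g (SN N, n) z : ℝ≥0) : ℝ≥0∞) ≤ G.indicator 1 z := by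
            intro z
            by_cases hz : z ∈ G
            · rw [Set.indicator_of_mem hz]
              exact tsub_le_self
            · rw [Set.indicator_of_notMem hz]
              have hzW : z ∉ W (SN N) := fun h => hz (hWSG N h)
              rw [g_one (SN N, n) z hzW]
              simp
          exact le_iSup_of_le ⟨(SN N, n), hcond⟩ le_rfl
  · -- iSup ≤ μ G
    refine iSup_le fun p => ?_
    obtain ⟨q, hq⟩ := p
    have hm : Measurable fun z => ((g q z : ℝ≥0) : ℝ≥0∞) :=
      (ENNReal.continuous_coe.comp (g q).continuous).measurable
    calc (1 : ℝ≥0∞) - ∫⁻ z, ((g q z : ℝ≥0) : ℝ≥0∞) ∂μ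
        = ∫⁻ z, ((1 : ℝ≥0∞) - ((g q z : ℝ≥0) : ℝ≥0∞)) ∂μ :=
          (lintegral_one_sub μ hm (g_le_one q)).symm
      _ ≤ ∫⁻ z, G.indicator 1 z ∂μ := lintegral_mono hq
      _ = μ G := lintegral_indicator_one hG.measurableSet

/-- Integration of a fixed bounded continuous `ℝ≥0`-valued function is continuous on the space of
probability measures. -/
lemma cont_lintegral {Z : Type} [MetricSpace Z] [MeasurableSpace Z]
    [OpensMeasurableSpace Z] (φ : Z →ᵇ ℝ≥0) :
    Continuous fun μ : ProbabilityMeasure Z => ∫⁻ z, ((φ z : ℝ≥0) : ℝ≥0∞) ∂(μ : Measure Z) := by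
  rw [continuous_iff_continuousAt]
  intro μ
  exact (ProbabilityMeasure.tendsto_iff_forall_lintegral_tendsto.mp
    (tendsto_id (x := 𝓝 μ))) φ

/-- Evaluation at a measurable set is Borel measurable on the space of probability measures. -/
lemma eval_measurable {Z : Type} [MetricSpace Z] [SecondCountableTopology Z] [MeasurableSpace Z]
    [BorelSpace Z] {s : Set Z} (hs : MeasurableSet s) :
    Measurable[borel (ProbabilityMeasure Z)]
      fun μ : ProbabilityMeasure Z => (μ : Measure Z) s := by
  letI : MeasurableSpace (ProbabilityMeasure Z) := borel (ProbabilityMeasure Z)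
  haveI : BorelSpace (ProbabilityMeasure Z) := ⟨rfl⟩
  obtain ⟨g, g_le_one, hg⟩ := core Z
  have h_eq : (‹MeasurableSpace Z› : MeasurableSpace Z)
      = MeasurableSpace.generateFrom {U : Set Z | IsOpen U} := by
    rw [BorelSpace.measurable_eq (α := Z)]; rfl
  have main : ∀ ⦃s : Set Z⦄, MeasurableSet s →
      Measurable (fun μ : ProbabilityMeasure Z => (μ : Measure Z) s) := by
    refine MeasurableSpace.induction_on_inter h_eq isPiSystem_isOpen ?_ ?_ ?_ ?_
    · simpa using (measurable_const : Measurable fun _ : ProbabilityMeasure Z => (0 : ℝ≥0∞))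
    · intro G hG
      have hGopen : IsOpen G := hG
      have heq2 : (fun μ : ProbabilityMeasure Z => (μ : Measure Z) G)
          = fun μ : ProbabilityMeasure Z => ⨆ p : {p : Finset ℕ × ℕ //
              ∀ z : Z, (1 : ℝ≥0∞) - ((g p z : ℝ≥0) : ℝ≥0∞) ≤ G.indicator 1 z},
            (1 - ∫⁻ z, ((g (p : Finset ℕ × ℕ) z : ℝ≥0) : ℝ≥0∞) ∂(μ : Measure Z)) :=
        funext fun μ => hg G hGopen (μ : Measure Z) μ.prop
      rw [heq2]
      exact Measurable.iSup fun p => measurable_const.sub (cont_lintegral (g p)).measurable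
    · intro t htm hC
      have heq2 : (fun μ : ProbabilityMeasure Z => (μ : Measure Z) tᶜ)
          = fun μ : ProbabilityMeasure Z => 1 - (μ : Measure Z) t := by
        funext μ
        rw [measure_compl htm (measure_ne_top _ t), measure_univ]
      rw [heq2]
      exact measurable_const.sub hC
    · intro fs hdisj hmeas hC
      have heq2 : (fun μ : ProbabilityMeasure Z => (μ : Measure Z) (⋃ i, fs i))
          = fun μ : ProbabilityMeasure Z => ∑' i, (μ : Measure Z) (fs i) :=
        funext fun μ => measure_iUnion hdisj hmeas
      rw [heq2]
      exact Measurable.ennreal_tsum hC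
  exact main hs

/-- Type synonym carrying the topology induced by a map. -/
def WithInduced {α : Type} {β : Type} (_e : α → β) : Type := α

instance WithInduced.ts {α β : Type} (e : α → β) [t : TopologicalSpace β] :
    TopologicalSpace (WithInduced e) :=
  TopologicalSpace.induced (fun x : WithInduced e => e x) t

/-- If the topology of `α` is induced by a map into a second countable borel space, then the
Borel σ-algebra of `α` is the comap of the Borel σ-algebra. -/
lemma borel_comap_of_induced {α β : Type} [tα : TopologicalSpace α] [tβ : TopologicalSpace β]
    [SecondCountableTopology β] [mβ : MeasurableSpace β] [BorelSpace β] {e : α → β}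
    (h : tα = TopologicalSpace.induced e tβ) :
    borel α = MeasurableSpace.comap e mβ := by
  haveI : SecondCountableTopology α := by
    rw [h]; exact secondCountableTopology_induced α β e
  have hsub : tα = TopologicalSpace.generateFrom (Set.preimage e '' {V : Set β | IsOpen V}) := by
    rw [h]
    conv_lhs => rw [← generateFrom_setOf_isOpen tβ]
    exact induced_generateFrom_eq
  rw [borel_eq_generateFrom_of_subbasis hsub, ← MeasurableSpace.comap_generateFrom]
  congr 1
  rw [BorelSpace.measurable_eq (α := β)]
  rfl

/-- Measurability criterion: a map into probability measures (with Borel σ-algebra of the weak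
topology) is measurable provided integration against every bounded continuous `ℝ≥0`-valued
function is measurable. -/
lemma criterion {Z : Type} [MetricSpace Z] [SecondCountableTopology Z] [MeasurableSpace Z]
    [BorelSpace Z] [CompleteSpace Z] {A : Type} [MeasurableSpace A]
    {h : A → ProbabilityMeasure Z}
    (hh : ∀ φ : Z →ᵇ ℝ≥0,
      Measurable fun a => ∫⁻ z, ((φ z : ℝ≥0) : ℝ≥0∞) ∂(h a : Measure Z)) :
    @Measurable A (ProbabilityMeasure Z) _ (borel (ProbabilityMeasure Z)) h := by
  obtain ⟨g, g_le_one, hg⟩ := core Z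
  set e : ProbabilityMeasure Z → (Finset ℕ × ℕ) → ℝ≥0∞ :=
    fun μ p => ∫⁻ z, ((g p z : ℝ≥0) : ℝ≥0∞) ∂(μ : Measure Z) with he
  have e_cont : Continuous e := continuous_pi fun p => cont_lintegral (g p)
  -- the topology of P(Z) is induced by e
  have t_le : (inferInstance : TopologicalSpace (ProbabilityMeasure Z))
      ≤ TopologicalSpace.induced e inferInstance := continuous_iff_le_induced.mp e_cont
  have t_ge : TopologicalSpace.induced e inferInstance
      ≤ (inferInstance : TopologicalSpace (ProbabilityMeasure Z)) := by
    have ind : IsInducing (fun x : WithInduced e => e x) := ⟨rfl⟩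
    haveI : SecondCountableTopology (WithInduced e) :=
      secondCountableTopology_induced (WithInduced e) _ (fun x : WithInduced e => e x)
    have idcont : @Continuous (WithInduced e) (ProbabilityMeasure Z)
        (WithInduced.ts e) _ (fun x => x) := by
      apply SeqContinuous.continuous
      intro x a hxa
      let x' : ℕ → ProbabilityMeasure Z := x
      let a' : ProbabilityMeasure Z := a
      have coord : ∀ p, Tendsto (fun n => e (x' n) p) atTop (𝓝 (e a' p)) := by
        have h1 := ind.tendsto_nhds_iff.mp hxa
        exact fun p => (tendsto_pi_nhds.mp h1) p
      -- conclude weak convergence via portmanteau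
      refine tendsto_of_forall_isOpen_le_liminf (μ := a') (μs := x') ?_
      intro G hG
      -- first establish the ℝ≥0∞ inequality
      have main : (a' : Measure Z) G
          ≤ atTop.liminf fun n => ((x' n : ProbabilityMeasure Z) : Measure Z) G := by
        rw [hg G hG (a' : Measure Z) a'.prop]
        refine iSup_le fun p => ?_
        obtain ⟨q, hq⟩ := p
        have bound : ∀ ν : ProbabilityMeasure Z,
            (1 : ℝ≥0∞) - e ν q ≤ (ν : Measure Z) G := by
          intro ν
          have hm : Measurable fun z => ((g q z : ℝ≥0) : ℝ≥0∞) :=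
            (ENNReal.continuous_coe.comp (g q).continuous).measurable
          calc (1 : ℝ≥0∞) - e ν q
              = ∫⁻ z, ((1 : ℝ≥0∞) - ((g q z : ℝ≥0) : ℝ≥0∞)) ∂(ν : Measure Z) :=
                (lintegral_one_sub _ hm (g_le_one q)).symm
            _ ≤ ∫⁻ z, G.indicator 1 z ∂(ν : Measure Z) := lintegral_mono hq
            _ = (ν : Measure Z) G := lintegral_indicator_one hG.measurableSet
        have lim1 : Tendsto (fun n => (1 : ℝ≥0∞) - e (x' n) q) atTop
            (𝓝 ((1 : ℝ≥0∞) - e a' q)) :=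
          ((ENNReal.continuous_sub_left (by simp)).tendsto _).comp (coord q)
        calc (1 : ℝ≥0∞) - e a' q
            = atTop.liminf fun n => (1 : ℝ≥0∞) - e (x' n) q := lim1.liminf_eq.symm
          _ ≤ atTop.liminf fun n => ((x' n : ProbabilityMeasure Z) : Measure Z) G :=
              liminf_le_liminf (Filter.Eventually.of_forall fun n => bound (x' n))
      -- convert to the ℝ≥0 statement
      have aux : ((atTop.liminf fun n => (x' n : ProbabilityMeasure Z) G : ℝ≥0) : ℝ≥0∞)
          = atTop.liminf fun n => (((x' n : ProbabilityMeasure Z) G : ℝ≥0) : ℝ≥0∞) := by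
        refine Monotone.map_liminf_of_continuousAt (F := atTop) ENNReal.coe_mono
          (fun n => (x' n : ProbabilityMeasure Z) G) ENNReal.continuous_coe.continuousAt ?_ ?_
        · exact IsBoundedUnder.isCoboundedUnder_ge ⟨1, by
            simp only [eventually_map, eventually_atTop]
            exact ⟨0, fun n _ => ProbabilityMeasure.apply_le_one _ _⟩⟩
        · exact ⟨0, by simp⟩
      rw [← ENNReal.coe_le_coe]
      rw [aux]
      simp only [ProbabilityMeasure.ennreal_coeFn_eq_coeFn_toMeasure]
      exact main
    intro s hs
    exact idcont.isOpen_preimage s hs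
  have t_eq : (inferInstance : TopologicalSpace (ProbabilityMeasure Z))
      = TopologicalSpace.induced e inferInstance := le_antisymm t_le t_ge
  have key : borel (ProbabilityMeasure Z)
      = MeasurableSpace.comap e (inferInstance : MeasurableSpace ((Finset ℕ × ℕ) → ℝ≥0∞)) :=
    borel_comap_of_induced t_eq
  have me : Measurable (fun a => e (h a)) := measurable_pi_iff.mpr fun p => hh (g p)
  intro s hs
  rw [key] at hs
  obtain ⟨s', hs', rfl⟩ := hs
  exact me hs'

end Stmt17Aux

open scoped NNReal ENNReal
open BoundedContinuousFunction

/-- **Statement 17.** For Polish spaces `X`, `Y`, `Z` and a Borel map `f : X × Y → Z`,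
the map `f* : X × P(Y) → P(Z)`, `f*(x,μ) = (f_x)_*μ`, is Borel (with respect to the weak
topologies on the spaces of probability measures). -/
theorem stmt_17 (X Y Z : Type)
    [TopologicalSpace X] [PolishSpace X] [MeasurableSpace X] [BorelSpace X]
    [TopologicalSpace Y] [PolishSpace Y] [MeasurableSpace Y] [BorelSpace Y]
    [TopologicalSpace Z] [PolishSpace Z] [MeasurableSpace Z] [BorelSpace Z]
    (f : X × Y → Z) (hf : Measurable f) :
    letI : MeasurableSpace (ProbabilityMeasure Y) := borel (ProbabilityMeasure Y)
    letI : MeasurableSpace (ProbabilityMeasure Z) := borel (ProbabilityMeasure Z)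
    ∀ fstar : X × ProbabilityMeasure Y → ProbabilityMeasure Z,
      (∀ (x : X) (m : ProbabilityMeasure Y),
        (fstar (x, m) : Measure Z) = Measure.map (fun y => f (x, y)) (m : Measure Y)) →
      Measurable fstar := by
  intro fstar hstar
  letI : MeasurableSpace (ProbabilityMeasure Y) := borel (ProbabilityMeasure Y)
  letI : MeasurableSpace (ProbabilityMeasure Z) := borel (ProbabilityMeasure Z)
  letI := TopologicalSpace.upgradeIsCompletelyMetrizable Y
  letI := TopologicalSpace.upgradeIsCompletelyMetrizable Z
  haveI hbY : BorelSpace Y := ⟨BorelSpace.measurable_eq (α := Y)⟩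
  haveI hbZ : BorelSpace Z := ⟨BorelSpace.measurable_eq (α := Z)⟩
  have main : ∀ φ : Z →ᵇ ℝ≥0,
      Measurable fun a : X × ProbabilityMeasure Y =>
        ∫⁻ z, ((φ z : ℝ≥0) : ℝ≥0∞) ∂(fstar a : Measure Z) := by
    intro φ
    have eq1 : (fun a : X × ProbabilityMeasure Y =>
          ∫⁻ z, ((φ z : ℝ≥0) : ℝ≥0∞) ∂(fstar a : Measure Z))
        = fun a : X × ProbabilityMeasure Y =>
          ∫⁻ y, ((φ (f (a.1, y)) : ℝ≥0) : ℝ≥0∞) ∂((a.2 : Measure Y)) := by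
      funext a
      obtain ⟨x, μ⟩ := a
      rw [hstar x μ]
      have h1 : Measurable fun z : Z => ((φ z : ℝ≥0) : ℝ≥0∞) :=
        (ENNReal.continuous_coe.comp φ.continuous).measurable
      have h2 : Measurable fun y : Y => f (x, y) := hf.comp measurable_prodMk_left
      rw [lintegral_map h1 h2]
    rw [eq1]
    have hT : Measurable (fun μ : ProbabilityMeasure Y => (μ : Measure Y)) :=
      Measure.measurable_of_measurable_coe _ (fun s hs => Stmt17Aux.eval_measurable hs)
    set κ : ProbabilityTheory.Kernel (X × ProbabilityMeasure Y) Y :=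
      ⟨fun a => (a.2 : Measure Y), hT.comp measurable_snd⟩ with hκ
    haveI : ProbabilityTheory.IsMarkovKernel κ := ⟨fun a => a.2.prop⟩
    have hfm : Measurable (Function.uncurry
        (fun (a : X × ProbabilityMeasure Y) (y : Y) => ((φ (f (a.1, y)) : ℝ≥0) : ℝ≥0∞))) := by
      apply (ENNReal.continuous_coe.comp φ.continuous).measurable.comp
      exact hf.comp ((measurable_fst.comp measurable_fst).prodMk measurable_snd)
    exact Measurable.lintegral_kernel_prod_right (κ := κ) hfm
  exact Stmt17Aux.criterion (Z := Z) (A := X × ProbabilityMeasure Y) main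
end
end
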